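/- Let Q ∈ ℝ^{M×np} be partitioned into column blocks Q = [Q₁,…,Q_p] with each Q_j ∈ ℝ^{M×n}, and define s^* = inf{‖z‖_{b1}/‖z‖_{b∞} : z ≠ 0, Qz = 0} (s^* = +∞ if ker Q = {0}). For each i, let t_i = inf over matrices P_i ∈ ℝ^{M×n} of max_{1≤j≤p} ‖δ_{ij} I_n − P_iᵀ Q_j‖₂ (spectral norm), where δ_{ij} = 1 if i = j and 0 otherwise, and set t = max_{1≤i≤p} t_i. Then s_* := 1/t is a lower bound on s^*: every nonzero z with Qz = 0 satisfies ‖z‖_{b∞} ≤ t · ‖z‖_{b1}, hence s_* ≤ s^*. -/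

import Mathlib

open MeasureTheory ProbabilityTheory Finset Matrix

/-- Euclidean norm of a finitely-indexed real vector. -/
noncomputable def vnorm {ι : Type*} [Fintype ι] (v : ι → ℝ) : ℝ :=
  Real.sqrt (∑ i, (v i) ^ 2)

/-- Euclidean norm of the `i`-th block of `x ∈ ℝ^{np}` (blocks indexed by `Fin p`). -/
noncomputable def bnorm {n p : ℕ} (x : Fin p × Fin n → ℝ) (i : Fin p) : ℝ :=
  vnorm (fun j => x (i, j))

/-- Block-ℓ1 norm: `‖x‖_{b1} = ∑ i, ‖x_i‖₂`. -/
noncomputable def bl1 {n p : ℕ} (x : Fin p × Fin n → ℝ) : ℝ :=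
  ∑ i, bnorm x i

/-- Block-ℓ∞ norm: `‖x‖_{b∞} = max_i ‖x_i‖₂`. -/
noncomputable def blinf {n p : ℕ} (x : Fin p × Fin n → ℝ) : ℝ :=
  ⨆ i, bnorm x i

open scoped Classical in
/-- Block support: indices of nonzero blocks. -/
noncomputable def bsupp {n p : ℕ} (x : Fin p × Fin n → ℝ) : Finset (Fin p) :=
  Finset.univ.filter (fun i => ∃ j, x (i, j) ≠ 0)

/-- `ω₂(A,s) = inf { ‖Az‖₂ / ‖z‖_{b∞} : z ≠ 0, ‖z‖_{b1} ≤ s ‖z‖_{b∞} }`. -/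
noncomputable def omega2 {m n p : ℕ} (A : Matrix (Fin m) (Fin p × Fin n) ℝ) (s : ℝ) : ℝ :=
  sInf {r | ∃ z : Fin p × Fin n → ℝ, z ≠ 0 ∧ bl1 z ≤ s * blinf z ∧
    r = vnorm (A.mulVec z) / blinf z}

/-- `ω_{b∞}(AᵀA,s) = inf { ‖AᵀAz‖_{b∞} / ‖z‖_{b∞} : z ≠ 0, ‖z‖_{b1} ≤ s ‖z‖_{b∞} }`. -/
noncomputable def omegaBInf {m n p : ℕ} (A : Matrix (Fin m) (Fin p × Fin n) ℝ) (s : ℝ) : ℝ :=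
  sInf {r | ∃ z : Fin p × Fin n → ℝ, z ≠ 0 ∧ bl1 z ≤ s * blinf z ∧
    r = blinf ((Aᵀ * A).mulVec z) / blinf z}

/-- Block ℓ1-constrained minimal singular value
`ρ_s(A) = inf { ‖Az‖₂ / ‖z‖₂ : z ≠ 0, ‖z‖_{b1}² ≤ s ‖z‖₂² }`. -/
noncomputable def rhoCMSV {m n p : ℕ} (A : Matrix (Fin m) (Fin p × Fin n) ℝ) (s : ℝ) : ℝ :=
  sInf {r | ∃ z : Fin p × Fin n → ℝ, z ≠ 0 ∧ (bl1 z) ^ 2 ≤ s * (vnorm z) ^ 2 ∧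
    r = vnorm (A.mulVec z) / vnorm z}

/-- Spectral norm (largest singular value) of a real matrix, as the ℓ2→ℓ2 operator norm. -/
noncomputable def specNorm {ι κ : Type*} [Fintype ι] [Fintype κ] (M : Matrix ι κ ℝ) : ℝ :=
  sSup {r | ∃ v : κ → ℝ, vnorm v ≤ 1 ∧ r = vnorm (M.mulVec v)}

/-- The `j`-th column block (of `n` columns) of a matrix with `np` columns. -/
def colBlock {ι : Type*} {n p : ℕ} (Q : Matrix ι (Fin p × Fin n) ℝ) (j : Fin p) :
    Matrix ι (Fin n) ℝ := Matrix.of fun r c => Q r (j, c)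

/-- The `l`-th row block (of `n` rows) of a matrix with `np` rows. -/
def rowBlock {κ : Type*} {n p : ℕ} (P : Matrix (Fin p × Fin n) κ ℝ) (l : Fin p) :
    Matrix (Fin n) κ ℝ := Matrix.of fun r c => P (l, r) c

/-- `δ_{ij} Iₙ`. -/
def deltaId (n : ℕ) {p : ℕ} (i j : Fin p) : Matrix (Fin n) (Fin n) ℝ :=
  if i = j then 1 else 0

/-- Orlicz ψ₂ norm of a scalar random variable. -/
noncomputable def psi2 {Ω : Type*} [MeasurableSpace Ω] (μ : Measure Ω) (Y : Ω → ℝ) : ℝ :=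
  sInf {t | 0 < t ∧ ∫ ω, Real.exp ((Y ω) ^ 2 / t ^ 2) ∂μ ≤ 2}

/-! If `Qz = 0` then `∑ⱼ Qⱼ zⱼ = 0`, so for every `P` the block `zᵢ` equals
`∑ⱼ (δᵢⱼ Iₙ - Pᵀ Qⱼ) zⱼ`. The triangle inequality and the operator-norm bound give
`‖zᵢ‖₂ ≤ (maxⱼ ‖δᵢⱼ Iₙ - Pᵀ Qⱼ‖₂) ‖z‖_{b1}`; taking the infimum over `P` and the maximum
over `i` yields `‖z‖_{b∞} ≤ t ‖z‖_{b1}`, and `t > 0` because `z ≠ 0`. -/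

section EuclideanNorm

variable {ι κ : Type*} [Fintype ι] [Fintype κ]

lemma vnorm_eq_norm (v : ι → ℝ) : vnorm v = ‖(WithLp.toLp 2 v : EuclideanSpace ℝ ι)‖ := by
  simp [vnorm, EuclideanSpace.norm_eq, sq_abs]

lemma vnorm_nonneg (v : ι → ℝ) : 0 ≤ vnorm v := Real.sqrt_nonneg _

lemma vnorm_pos {v : ι → ℝ} (hv : v ≠ 0) : 0 < vnorm v := by
  simpa [vnorm_eq_norm] using hv

lemma vnorm_sum_le {α : Type*} (s : Finset α) (f : α → ι → ℝ) :
    vnorm (∑ j ∈ s, f j) ≤ ∑ j ∈ s, vnorm (f j) := by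
  simpa only [vnorm_eq_norm, WithLp.toLp_sum] using norm_sum_le s fun j => WithLp.toLp 2 (f j)

lemma specNorm_eq_opNorm [DecidableEq κ] (A : Matrix ι κ ℝ) :
    specNorm A = ‖LinearMap.toContinuousLinearMap (Matrix.toEuclideanLin A)‖ := by
  rw [specNorm, ← ContinuousLinearMap.sSup_unitClosedBall_eq_norm]
  congr 1
  ext r
  constructor
  · rintro ⟨v, hv, rfl⟩
    exact ⟨WithLp.toLp 2 v, by simpa [vnorm_eq_norm] using hv, by simp [vnorm_eq_norm]⟩
  · rintro ⟨x, hx, rfl⟩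
    exact ⟨WithLp.ofLp x, by simpa [vnorm_eq_norm] using hx, by rw [vnorm_eq_norm]; rfl⟩

lemma vnorm_mulVec_le (A : Matrix ι κ ℝ) (v : κ → ℝ) :
    vnorm (A *ᵥ v) ≤ specNorm A * vnorm v := by
  classical
  rw [specNorm_eq_opNorm, vnorm_eq_norm, vnorm_eq_norm]
  exact (LinearMap.toContinuousLinearMap (Matrix.toEuclideanLin A)).le_opNorm (WithLp.toLp 2 v)

end EuclideanNorm

lemma le_csInf_mul {S : Set ℝ} (hS : S.Nonempty) {a c : ℝ} (hc : 0 ≤ c)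
    (h : ∀ r ∈ S, a ≤ r * c) : a ≤ sInf S * c := by
  rcases hc.eq_or_lt with rfl | hc
  · obtain ⟨r, hr⟩ := hS
    simpa using h r hr
  · rw [← div_le_iff₀ hc]
    exact le_csInf hS fun r hr => (div_le_iff₀ hc).2 (h r hr)

lemma vnorm_sum_mulVec_le {ι κ α : Type*} [Fintype ι] [Fintype κ] [Fintype α]
    (B : α → Matrix ι κ ℝ) (x : α → κ → ℝ) :
    vnorm (∑ j, B j *ᵥ x j) ≤ (⨆ j, specNorm (B j)) * ∑ j, vnorm (x j) := by
  rw [Finset.mul_sum]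
  refine (vnorm_sum_le _ _).trans (Finset.sum_le_sum fun j _ => ?_)
  refine (vnorm_mulVec_le _ _).trans (mul_le_mul_of_nonneg_right ?_ (vnorm_nonneg _))
  exact le_ciSup (Set.finite_range fun j => specNorm (B j)).bddAbove j

section Blocks

variable {ι : Type*} {n p : ℕ}

lemma exists_bnorm_pos {z : Fin p × Fin n → ℝ} (hz : z ≠ 0) : ∃ i, 0 < bnorm z i := by
  obtain ⟨⟨i, l⟩, hil⟩ := Function.ne_iff.mp hz
  exact ⟨i, vnorm_pos fun h => hil (congrFun h l)⟩

lemma bnorm_le_bl1 (z : Fin p × Fin n → ℝ) (i : Fin p) : bnorm z i ≤ bl1 z :=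
  Finset.single_le_sum (f := bnorm z) (fun _ _ => vnorm_nonneg _) (Finset.mem_univ i)

lemma bnorm_le_blinf (z : Fin p × Fin n → ℝ) (i : Fin p) : bnorm z i ≤ blinf z :=
  le_ciSup (Finite.bddAbove_range _) i

lemma mulVec_eq_sum_colBlock (Q : Matrix ι (Fin p × Fin n) ℝ) (z : Fin p × Fin n → ℝ) :
    Q *ᵥ z = ∑ j, colBlock Q j *ᵥ fun l => z (j, l) := by
  ext r
  simp [mulVec, dotProduct, Fintype.sum_prod_type, colBlock]

lemma sum_deltaId_mulVec (z : Fin p × Fin n → ℝ) (i : Fin p) :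
    ∑ j, deltaId n i j *ᵥ (fun l => z (j, l)) = fun l => z (i, l) := by
  rw [Finset.sum_eq_single i (fun j _ hj => by simp [deltaId, Ne.symm hj]) (by simp)]
  simp [deltaId]

lemma block_eq_sum_of_mulVec_eq_zero [Fintype ι] {Q : Matrix ι (Fin p × Fin n) ℝ}
    {z : Fin p × Fin n → ℝ} (hz : Q *ᵥ z = 0) (P : Matrix ι (Fin n) ℝ) (i : Fin p) :
    (fun l => z (i, l)) = ∑ j, (deltaId n i j - Pᵀ * colBlock Q j) *ᵥ fun l => z (j, l) := by
  simp only [sub_mulVec, Finset.sum_sub_distrib, ← mulVec_mulVec, ← Matrix.mulVec_sum,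
    ← mulVec_eq_sum_colBlock, hz, mulVec_zero, sub_zero, sum_deltaId_mulVec]

lemma bnorm_le_of_mulVec_eq_zero [Fintype ι] {Q : Matrix ι (Fin p × Fin n) ℝ}
    {z : Fin p × Fin n → ℝ} (hz : Q *ᵥ z = 0) (i : Fin p) :
    bnorm z i ≤ sInf {r | ∃ P : Matrix ι (Fin n) ℝ,
      r = ⨆ j : Fin p, specNorm (deltaId n i j - Pᵀ * colBlock Q j)} * bl1 z := by
  refine le_csInf_mul ?_ (Finset.sum_nonneg fun j _ => vnorm_nonneg _) ?_
  · exact ⟨_, 0, rfl⟩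
  rintro r ⟨P, rfl⟩
  rw [bnorm, block_eq_sum_of_mulVec_eq_zero hz P i]
  exact vnorm_sum_mulVec_le _ _

end Blocks

/-- Proposition 2: with
`t = max_i inf_{P_i} max_j ‖δ_{ij} Iₙ - P_iᵀ Q_j‖₂`, every nonzero `z ∈ ker Q` satisfies
`‖z‖_{b∞} ≤ t ‖z‖_{b1}`, hence `s_* = 1/t` is a lower bound on `s^*`:
`1/t ≤ ‖z‖_{b1}/‖z‖_{b∞}` for every nonzero `z ∈ ker Q`. -/
theorem stmt13 {M n p : ℕ} (Q : Matrix (Fin M) (Fin p × Fin n) ℝ) (t : ℝ)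
    (ht : t = ⨆ i : Fin p, sInf {r | ∃ P : Matrix (Fin M) (Fin n) ℝ,
      r = ⨆ j : Fin p, specNorm (deltaId n i j - Pᵀ * colBlock Q j)}) :
    ∀ z : Fin p × Fin n → ℝ, z ≠ 0 → Q.mulVec z = 0 →
      blinf z ≤ t * bl1 z ∧ 1 / t ≤ bl1 z / blinf z := by
  intro z hz hQz
  obtain ⟨i₀, hi₀⟩ := exists_bnorm_pos hz
  have : Nonempty (Fin p) := ⟨i₀⟩
  have hblinf : 0 < blinf z := hi₀.trans_le (bnorm_le_blinf z i₀)
  have hbl1 : 0 < bl1 z := hi₀.trans_le (bnorm_le_bl1 z i₀)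
  have hmain : blinf z ≤ t * bl1 z := by
    set τ : Fin p → ℝ := fun i => sInf {r | ∃ P : Matrix (Fin M) (Fin n) ℝ,
      r = ⨆ j : Fin p, specNorm (deltaId n i j - Pᵀ * colBlock Q j)}
    refine ciSup_le fun i => (bnorm_le_of_mulVec_eq_zero hQz i).trans ?_
    rw [ht]
    exact mul_le_mul_of_nonneg_right (le_ciSup (Set.finite_range τ).bddAbove i) hbl1.le
  have ht_pos : 0 < t := pos_of_mul_pos_left (hblinf.trans_le hmain) hbl1.le
  refine ⟨hmain, ?_⟩
  rwa [div_le_div_iff₀ ht_pos hblinf, one_mul, mul_comm]
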